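/- For any function f : {-1,1}^n → {-1,1}, if there exists a distribution μ on {-1,1}^n with |Σ_x μ(x) f(x) χ_S(x)| ≤ δ/2^n for every S ⊆ [n], then the lifted distribution μ^⊕(x,y) = 2^{-n} μ(x ⊙ y) (where ⊙ denotes coordinatewise product) witnesses disc_{μ^⊕}(f ∘ XOR) ≤ δ. -/
import Mathlib


open scoped BigOperators

noncomputable section

/-- sign value of a bit: `true` ↦ -1, `false` ↦ 1 (±1 encoding of the cube). -/
def sgnv (b : Bool) : ℝ := if b then -1 else 1

/-- the Fourier character χ_S on the cube. -/
def chi {ι : Type*} (S : Finset ι) (x : ι → Bool) : ℝ := ∏ i ∈ S, sgnv (x i)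

/-- `μ` is a probability distribution on the finite type `α`. -/
def IsDistrib {α : Type*} [Fintype α] (mu : α → ℝ) : Prop :=
  (∀ a, 0 ≤ mu a) ∧ ∑ a, mu a = 1

/-- the discrepancy of the two-party function `F` under the distribution `lam`:
the maximum over rectangles `S × T` of `|∑_{(x,y)∈S×T} F x y · lam (x,y)|`. -/
def discUnder {α β : Type*} [Fintype α] [Fintype β] (lam : α × β → ℝ)
    (F : α → β → ℝ) : ℝ :=
  sSup {r : ℝ | ∃ S : Finset α, ∃ T : Finset β,
    r = |∑ x ∈ S, ∑ y ∈ T, F x y * lam (x, y)|}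

/-- `f ∘ XOR` as a two-party function (in the ±1 encoding the XOR of bits is the
product of the ±1 values, i.e. coordinatewise product corresponds to `xor`). -/
def fXOR2 {n : ℕ} (f : (Fin n → Bool) → ℝ) : (Fin n → Bool) → (Fin n → Bool) → ℝ :=
  fun x y => f (fun i => xor (x i) (y i))

lemma sgnv_xor (a b : Bool) : sgnv (xor a b) = sgnv a * sgnv b := by
  cases a <;> cases b <;> simp [sgnv]

lemma chi_mul {n : ℕ} (A : Finset (Fin n)) (x y : Fin n → Bool) :
    chi A x * chi A y = chi A (fun i => xor (x i) (y i)) := by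
  simp [chi, ← Finset.prod_mul_distrib, sgnv_xor]

lemma sum_chi {n : ℕ} (z : Fin n → Bool) :
    ∑ A : Finset (Fin n), chi A z = if z = fun _ => false then (2:ℝ)^n else 0 := by
  have h : ∑ A : Finset (Fin n), chi A z = ∏ i : Fin n, (sgnv (z i) + 1) := by
    rw [Finset.prod_add, ← Finset.powerset_univ]
    simp [chi]
  rw [h]
  by_cases hz : z = fun _ => false
  · subst hz; norm_num [sgnv]
  · rw [if_neg hz]
    obtain ⟨i, hi⟩ : ∃ i, z i = true := by
      by_contra hc
      push_neg at hc
      exact hz (funext fun i => by simpa using hc i)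
    exact Finset.prod_eq_zero (Finset.mem_univ i) (by simp [hi, sgnv])

lemma sum_chi_mul {n : ℕ} (x y : Fin n → Bool) :
    ∑ A : Finset (Fin n), chi A x * chi A y = if x = y then (2:ℝ)^n else 0 := by
  simp_rw [chi_mul, sum_chi]
  by_cases h : x = y
  · subst h; simp
  · rw [if_neg h, if_neg]
    intro hc
    exact h (funext fun i => by
      have := congrFun hc i
      revert this; cases x i <;> cases y i <;> simp)

lemma parseval_ind {n : ℕ} (S : Finset (Fin n → Bool)) :
    ∑ A : Finset (Fin n), (∑ x ∈ S, chi A x)^2 = 2^n * S.card := by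
  simp_rw [sq, Finset.sum_mul_sum]
  rw [Finset.sum_comm]
  have : ∀ x ∈ S, ∑ A : Finset (Fin n), ∑ y ∈ S, chi A x * chi A y
      = ∑ y ∈ S, ∑ A : Finset (Fin n), chi A x * chi A y := fun x _ => Finset.sum_comm
  rw [Finset.sum_congr rfl this]
  simp_rw [sum_chi_mul]
  simp [Finset.sum_ite_eq, mul_comm]

lemma inversion {n : ℕ} (g : (Fin n → Bool) → ℝ) (z : Fin n → Bool) :
    ∑ A : Finset (Fin n), (∑ w, g w * chi A w) * chi A z = 2^n * g z := by
  simp_rw [Finset.sum_mul, mul_assoc]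
  rw [Finset.sum_comm]
  simp_rw [← Finset.mul_sum, sum_chi_mul]
  simp [Finset.sum_ite_eq, mul_comm]

/-- if `μ` is a distribution on `{-1,1}^n` with
`|Σ_x μ(x) f(x) χ_S(x)| ≤ δ/2^n` for every `S`, then the lifted distribution
`μ^⊕(x,y) = 2^{-n} μ(x ⊙ y)` witnesses `disc_{μ^⊕}(f ∘ XOR) ≤ δ`. -/
theorem disc_lifted_le (n : ℕ) (f : (Fin n → Bool) → ℝ)
    (hf : ∀ x, f x = 1 ∨ f x = -1)
    (mu : (Fin n → Bool) → ℝ) (hmu : IsDistrib mu) (δ : ℝ)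
    (hS : ∀ S : Finset (Fin n), |∑ x : Fin n → Bool, mu x * f x * chi S x| ≤ δ / 2 ^ n) :
    discUnder (fun p : (Fin n → Bool) × (Fin n → Bool) => mu (fun i => xor (p.1 i) (p.2 i)) / 2 ^ n) (fXOR2 f) ≤ δ := by
  have h2n : (0:ℝ) < 2 ^ n := by positivity
  have hδ : 0 ≤ δ := by
    have h0 : (0:ℝ) ≤ δ / 2 ^ n := le_trans (abs_nonneg _) (hS ∅)
    have := mul_nonneg h0 h2n.le
    rwa [div_mul_cancel₀ _ (ne_of_gt h2n)] at this
  apply Real.sSup_le _ hδ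
  rintro r ⟨S, T, rfl⟩
  set hat : Finset (Fin n) → ℝ := fun A => ∑ x, mu x * f x * chi A x with hhat
  have hg : ∀ z, mu z * f z = (∑ A : Finset (Fin n), hat A * chi A z) / 2 ^ n := by
    intro z
    rw [hhat]
    simp only
    rw [inversion (fun w => mu w * f w) z]
    field_simp
  set a : Finset (Fin n) → ℝ := fun A => ∑ x ∈ S, chi A x with ha
  set b : Finset (Fin n) → ℝ := fun A => ∑ y ∈ T, chi A y with hb
  have key : ∑ x ∈ S, ∑ y ∈ T, fXOR2 f x y * (mu (fun i => xor (x i) (y i)) / 2 ^ n)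
      = ∑ A : Finset (Fin n), hat A / (2^n * 2^n) * (a A * b A) := by
    have step1 : ∑ x ∈ S, ∑ y ∈ T, fXOR2 f x y * (mu (fun i => xor (x i) (y i)) / 2 ^ n)
        = ∑ x ∈ S, ∑ y ∈ T, ∑ A : Finset (Fin n),
            hat A / (2^n * 2^n) * (chi A x * chi A y) := by
      refine Finset.sum_congr rfl fun x _ => Finset.sum_congr rfl fun y _ => ?_
      rw [fXOR2]
      have h1 := hg (fun i => xor (x i) (y i))
      rw [show f (fun i => xor (x i) (y i)) * (mu (fun i => xor (x i) (y i)) / 2 ^ n)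
            = (mu (fun i => xor (x i) (y i)) * f (fun i => xor (x i) (y i))) / 2 ^ n from by ring,
          h1, div_div, Finset.sum_div]
      refine Finset.sum_congr rfl fun A _ => ?_
      rw [← chi_mul]
      ring
    rw [step1, Finset.sum_congr rfl fun x _ => Finset.sum_comm, Finset.sum_comm]
    refine Finset.sum_congr rfl fun A _ => ?_
    rw [ha, hb]
    simp only
    rw [Finset.sum_mul_sum, Finset.mul_sum]
    exact Finset.sum_congr rfl fun x _ => (Finset.mul_sum _ _ _).symm
  rw [key]
  have hhatb : ∀ A, |hat A| ≤ δ / 2 ^ n := fun A => hS A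
  have hcard : ∀ (U : Finset (Fin n → Bool)), (U.card : ℝ) ≤ 2 ^ n := by
    intro U
    have := Finset.card_le_univ U
    have hcu : Fintype.card (Fin n → Bool) = 2 ^ n := by
      simp [Fintype.card_fun]
    calc (U.card : ℝ) ≤ (Fintype.card (Fin n → Bool) : ℝ) := by exact_mod_cast this
      _ = 2 ^ n := by rw [hcu]; push_cast; ring
  have ha2 : ∑ A : Finset (Fin n), (a A)^2 = 2^n * S.card := parseval_ind S
  have hb2 : ∑ A : Finset (Fin n), (b A)^2 = 2^n * T.card := parseval_ind T
  have hcs : ∑ A : Finset (Fin n), |a A| * |b A| ≤ 2^n * 2^n := by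
    have h1 := Finset.sum_mul_sq_le_sq_mul_sq Finset.univ (fun A => |a A|) (fun A => |b A|)
    have h2 : ∑ A : Finset (Fin n), |a A|^2 = 2^n * S.card := by
      simp_rw [sq_abs]; exact ha2
    have h3 : ∑ A : Finset (Fin n), |b A|^2 = 2^n * T.card := by
      simp_rw [sq_abs]; exact hb2
    rw [h2, h3] at h1
    have hs := hcard S
    have ht := hcard T
    have hnn : 0 ≤ ∑ A : Finset (Fin n), |a A| * |b A| :=
      Finset.sum_nonneg fun A _ => mul_nonneg (abs_nonneg _) (abs_nonneg _)
    have hsc : (0:ℝ) ≤ S.card := Nat.cast_nonneg _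
    have htc : (0:ℝ) ≤ T.card := Nat.cast_nonneg _
    have hP : (∑ A : Finset (Fin n), |a A| * |b A|)^2 ≤ (2^n * 2^n : ℝ)^2 := by
      nlinarith [mul_le_mul hs ht htc h2n.le]
    nlinarith [hP, hnn, sq_nonneg (∑ A : Finset (Fin n), |a A| * |b A| - 2^n * 2^n),
      sq_nonneg (∑ A : Finset (Fin n), |a A| * |b A| + 2^n * 2^n)]
  calc |∑ A : Finset (Fin n), hat A / (2^n * 2^n) * (a A * b A)|
      ≤ ∑ A : Finset (Fin n), |hat A / (2^n * 2^n) * (a A * b A)| :=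
        Finset.abs_sum_le_sum_abs _ _
    _ ≤ ∑ A : Finset (Fin n), (δ / 2^n) / (2^n * 2^n) * (|a A| * |b A|) := by
        refine Finset.sum_le_sum fun A _ => ?_
        rw [abs_mul, abs_div, abs_mul, abs_mul, abs_of_pos h2n]
        apply mul_le_mul_of_nonneg_right _ (mul_nonneg (abs_nonneg _) (abs_nonneg _))
        exact (div_le_div_iff_of_pos_right (by positivity)).mpr (hhatb A)
    _ = (δ / 2^n) / (2^n * 2^n) * ∑ A : Finset (Fin n), |a A| * |b A| := by
        rw [Finset.mul_sum]
    _ ≤ (δ / 2^n) / (2^n * 2^n) * (2^n * 2^n) := by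
        apply mul_le_mul_of_nonneg_left hcs
        positivity
    _ = δ / 2^n := by field_simp
    _ ≤ δ := div_le_self hδ (one_le_pow₀ (by norm_num))

end
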